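/- arXiv:2104.14523 — 2 statements merged into one kernel-verified Lean document; each statement's English description precedes it below -/
import Mathlib

section
/- Let n > 4 be an integer and a, b, c ∈ ℂ with abc ≠ 0. Set e₁ = -((n-2)ab + cn)/(b(n-1)) and e₂ = ac/b. Then the discriminant of f(x) = xⁿ + ax^{n-1} + bx + c equals (-1)^{(n+2)(n-1)/2} · n⁴ · (n-1)^{n-3} · a^{-2} · b^{n-2} · [ ((n-1)a²/n²)² e₂^{n-2} + ((n-1)b/n)² e₂ + ((n-1)b/n)(c - ab/n²) e₁ + (c - ab/n²)² - (1+(-1)ⁿ)·((n-1)a²/n²)·(c - ab/n²)·((e₁/2)² - e₂)^{(n-2)/2} - ((n-1)a²/n²) · Σ_{i=0}^{⌊(n-3)/2⌋} ( 2((n-1)b/n)e₂ + (c - ab/n²)·((n-2)/(n-2-2i))·e₁ ) · C(n-3, 2i) · (e₁/2)^{n-3-2i} · ((e₁/2)² - e₂)^{i} ], where the term with exponent (n-2)/2 is present only when n is even (for n odd its coefficient 1+(-1)ⁿ vanishes, and for n even the exponent (n-2)/2 is an integer). -/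
open Polynomial Finset Lagrange

/-!
With `f = ∏ (X - ξᵢ)`, the product over pairs is `(-1)^(n(n-1)/2) ∏ f'(ξᵢ)`. At a root of
`f`, `ξ f'(ξ) = -g(ξ)` for `g = n f - X f' = a X^(n-1) + (n-1) b X + n c`, so
`c ∏ f'(ξᵢ) = ∏ g(ξᵢ)`, the resultant of `f` and `g`. Evaluated instead over the roots `r`
of `g`, where `a f(r) = -(n-1) b (r - u)(r - v)` with `u + v = e₁` and `u v = e₂`, the
resultant becomes `g(u) g(v)` up to explicit factors. That is a polynomial in `e₁`, `e₂` and
the power sums `u^k + v^k`, which the binomial theorem expands in `e₁/2` and `(e₁/2)^2 - e₂`.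
-/

section CommRing

variable {R : Type*} [CommRing R]

theorem prod_filter_lt_sub_sq_eq_prod_eval_derivative_nodal {n : ℕ} (ξ : Fin n → R) :
    ∏ p ∈ univ.filter (fun p : Fin n × Fin n => p.1 < p.2), (ξ p.1 - ξ p.2) ^ 2
      = (-1) ^ (n * (n - 1) / 2) * ∏ i, (derivative (nodal univ ξ)).eval (ξ i) := by
  have hcard : ∑ i : Fin n, #(Ioi i) = n * (n - 1) / 2 := by
    simp only [Fin.card_Ioi]
    rw [Fin.sum_univ_eq_sum_range (fun i => n - 1 - i)]
    exact (sum_range_reflect (fun i => i) n).trans (sum_range_id n)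
  calc _ = ∏ i, ∏ j ∈ Ioi i, (-1) * ((ξ i - ξ j) * (ξ j - ξ i)) := by
        rw [prod_filter, Fintype.prod_prod_type]
        refine prod_congr rfl fun i _ => ?_
        rw [← prod_filter, filter_lt_eq_Ioi]
        exact prod_congr rfl fun j _ => by ring
    _ = (-1) ^ (n * (n - 1) / 2) * ∏ i, ∏ j ∈ {i}ᶜ, (ξ i - ξ j) := by
        rw [← prod_prod_Ioi_mul_eq_prod_prod_off_diag (fun j i => ξ i - ξ j)]
        simp only [prod_mul_distrib, prod_const, prod_pow_eq_pow_sum, hcard]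
    _ = _ := by
        simp only [eval_nodal_derivative_eval_node_eq (mem_univ _), eval_nodal, compl_singleton]

theorem eval_zero_mul_prod_eval_derivative_nodal {ι : Type*} [Fintype ι] (ξ : ι → R) :
    (nodal univ ξ).eval 0 * ∏ i, (derivative (nodal univ ξ)).eval (ξ i)
      = ∏ i, (C (Fintype.card ι : R) * nodal univ ξ
          - X * derivative (nodal univ ξ)).eval (ξ i) := by
  have hroot (i : ι) :
      (C (Fintype.card ι : R) * nodal univ ξ - X * derivative (nodal univ ξ)).eval (ξ i)
        = (0 - ξ i) * (derivative (nodal univ ξ)).eval (ξ i) := by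
    simp [eval_nodal_at_node (mem_univ i)]
  simp only [hroot, prod_mul_distrib, eval_nodal]

theorem add_pow_add_sub_pow (t s : R) (m : ℕ) :
    (t + s) ^ m + (t - s) ^ m
      = 2 * ∑ i ∈ range (m / 2 + 1),
          (m.choose (2 * i) : R) * t ^ (m - 2 * i) * (s ^ 2) ^ i := by
  have hparity (k : ℕ) : s ^ k + (-s) ^ k = if Even k then 2 * s ^ k else 0 := by
    split_ifs with hk
    · rw [hk.neg_pow]; ring
    · rw [(Nat.not_even_iff_odd.mp hk).neg_pow]; ring
  have hevens : (range (m + 1)).filter Even = (range (m / 2 + 1)).image (2 * ·) := by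
    ext k
    simp only [mem_filter, mem_range, mem_image]
    constructor
    · rintro ⟨hk, r, rfl⟩
      exact ⟨r, by omega, by ring⟩
    · rintro ⟨r, hr, rfl⟩
      exact ⟨by omega, even_two_mul r⟩
  rw [sub_eq_add_neg, add_comm t, add_comm t, add_pow, add_pow, ← sum_add_distrib]
  simp only [← add_mul, hparity, ite_mul, zero_mul]
  rw [← sum_filter, hevens, sum_image (fun _ _ _ _ h => by omega), mul_sum]
  refine sum_congr rfl fun i _ => ?_
  rw [pow_mul']
  ring

theorem add_pow_add_sub_pow_eq_sum_add {t s : R} {m : ℕ} (hm : 0 < m) :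
    (t + s) ^ m + (t - s) ^ m
      = 2 * ∑ i ∈ range ((m - 1) / 2 + 1),
            (m.choose (2 * i) : R) * t ^ (m - 2 * i) * (s ^ 2) ^ i
        + (1 + (-1) ^ m) * (s ^ 2) ^ (m / 2) := by
  rw [add_pow_add_sub_pow]
  rcases Nat.even_or_odd m with ⟨k, rfl⟩ | hodd
  · obtain ⟨j, rfl⟩ : ∃ j, k = j + 1 := ⟨k - 1, by omega⟩
    rw [show (j + 1 + (j + 1)) / 2 + 1 = (j + 1 + (j + 1) - 1) / 2 + 1 + 1 by omega,
      sum_range_succ, show (j + 1 + (j + 1) - 1) / 2 + 1 = j + 1 by omega,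
      show (j + 1 + (j + 1)) / 2 = j + 1 by omega, show 2 * (j + 1) = j + 1 + (j + 1) by ring,
      Nat.choose_self, Nat.sub_self, Even.neg_one_pow ⟨j + 1, rfl⟩]
    push_cast
    ring
  · rw [hodd.neg_one_pow, show (m - 1) / 2 = m / 2 by obtain ⟨k, rfl⟩ := hodd; omega]
    ring

end CommRing

section IsDomain

variable {R : Type*} [CommRing R] [IsDomain R] {g : R[X]}

theorem Polynomial.Splits.eval_eq_neg_one_pow_mul_prod_roots_sub (hg : g.Splits) (x : R) :
    g.eval x = (-1) ^ g.natDegree * g.leadingCoeff * (g.roots.map (· - x)).prod := by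
  have hneg := Multiset.prod_map_neg (g.roots.map (· - x))
  simp only [Multiset.map_map, Function.comp_def, neg_sub, Multiset.card_map] at hneg
  rw [hg.eval_eq_prod_roots, hg.natDegree_eq_card_roots, hneg]
  ring

theorem prod_eval_eq_prod_roots_eval_nodal (hg : g.Splits) {ι : Type*} [Fintype ι]
    (ξ : ι → R) :
    ∏ i, g.eval (ξ i) = (-1) ^ (Fintype.card ι * g.natDegree) * g.leadingCoeff ^ Fintype.card ι
      * (g.roots.map fun r => (nodal univ ξ).eval r).prod := by
  simp only [hg.eval_eq_neg_one_pow_mul_prod_roots_sub, prod_mul_distrib, prod_const, card_univ,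
    eval_nodal, ← pow_mul, mul_comm g.natDegree]
  rw [prod_eq_multiset_prod, Multiset.prod_map_prod_map]
  rfl

/-- Both sides compute the resultant of `nodal univ ξ` and `g`, over the roots of one polynomial
or of the other; `hroots` says that `lc g • nodal univ ξ ≡ -k (X - u) (X - v)` modulo `g`. -/
theorem leadingCoeff_mul_prod_eval_eq (hg : g.Splits) {ι : Type*} [Fintype ι] (ξ : ι → R)
    (hcard : Fintype.card ι = g.natDegree + 1) (k u v : R)
    (hroots : ∀ r ∈ g.roots,
      g.leadingCoeff * (nodal univ ξ).eval r = -k * ((r - u) * (r - v))) :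
    g.leadingCoeff * ∏ i, g.eval (ξ i) = (-k) ^ g.natDegree * (g.eval u * g.eval v) := by
  have hdeg := hg.natDegree_eq_card_roots
  have hprod : g.leadingCoeff ^ g.natDegree * (g.roots.map fun r => (nodal univ ξ).eval r).prod
      = (-k) ^ g.natDegree * ((g.roots.map (· - u)).prod * (g.roots.map (· - v)).prod) := by
    calc _ = (g.roots.map fun r => g.leadingCoeff * (nodal univ ξ).eval r).prod := by
          rw [Multiset.prod_map_mul, Multiset.map_const', Multiset.prod_replicate, hdeg]
      _ = (g.roots.map fun r => -k * ((r - u) * (r - v))).prod := by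
          rw [Multiset.map_congr rfl hroots]
      _ = _ := by
          rw [Multiset.prod_map_mul, Multiset.prod_map_mul, Multiset.map_const',
            Multiset.prod_replicate, hdeg]
  rw [prod_eval_eq_prod_roots_eval_nodal hg, hg.eval_eq_neg_one_pow_mul_prod_roots_sub,
    hg.eval_eq_neg_one_pow_mul_prod_roots_sub, hcard]
  have hsign : (-1 : R) ^ ((g.natDegree + 1) * g.natDegree) = 1 :=
    (mul_comm g.natDegree _ ▸ Nat.even_mul_succ_self g.natDegree).neg_one_pow
  have hsq : (-1 : R) ^ g.natDegree * (-1) ^ g.natDegree = 1 := by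
    rw [← mul_pow]; norm_num
  rw [hsign]
  linear_combination g.leadingCoeff ^ 2 * hprod - g.leadingCoeff ^ 2 * (-k) ^ g.natDegree
    * (g.roots.map (· - u)).prod * (g.roots.map (· - v)).prod * hsq

end IsDomain

theorem Nat.cast_choose_succ_eq {K : Type*} [Field K] [CharZero K] {m k : ℕ} (hk : k ≤ m) :
    ((m + 1).choose k : K) = ((m : K) + 1) / ((m : K) + 1 - k) * m.choose k := by
  have hpos : ((m : K) + 1 - k) ≠ 0 := by
    rw [← Nat.cast_succ, ← Nat.cast_sub (by omega)]; exact Nat.cast_ne_zero.mpr (by omega)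
  rw [div_mul_eq_mul_div, eq_div_iff hpos, ← Nat.cast_succ, ← Nat.cast_sub (by omega)]
  exact_mod_cast (Nat.choose_mul_succ_eq m k).symm.trans (Nat.mul_comm _ _)

theorem Nat.add_two_mul_sub_one_div_two (n : ℕ) :
    (n + 2) * (n - 1) / 2 = n * (n - 1) / 2 + (n - 1) := by
  obtain ⟨k, hk⟩ := Nat.even_mul_pred_self n
  rw [add_mul, hk]
  omega

theorem C_mul_sub_X_mul_derivative_quadrinomial {R : Type*} [CommRing R] {n : ℕ} (hn : 1 ≤ n)
    (a b c : R) :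
    C (n : R) * (X ^ n + C a * X ^ (n - 1) + C b * X + C c)
        - X * derivative (X ^ n + C a * X ^ (n - 1) + C b * X + C c)
      = C a * X ^ (n - 1) + C (((n : R) - 1) * b) * X + C ((n : R) * c) := by
  obtain ⟨m, rfl⟩ : ∃ m, n = m + 1 := ⟨n - 1, by omega⟩
  cases m with
  | zero =>
    simp only [zero_add, Nat.cast_one, map_one, pow_one, tsub_self, pow_zero, mul_one, one_mul,
      derivative_add, derivative_X, derivative_C, add_zero, derivative_mul, zero_mul, sub_self,
      map_zero]
    ring
  | succ m =>
    simp only [derivative_add, derivative_X_pow, derivative_mul, derivative_C, derivative_X,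
      Nat.add_sub_cancel, map_mul, map_sub, map_natCast, map_one]
    push_cast
    ring

theorem natDegree_C_mul_X_pow_add_C_mul_X_add_C {R : Type*} [Semiring R] {m : ℕ} (hm : 2 ≤ m)
    {a : R} (ha : a ≠ 0) (b c : R) :
    (C a * X ^ m + C b * X + C c).natDegree = m := by
  compute_degree!
  · simpa [show m ≠ 1 by omega, show m ≠ 0 by omega] using ha
  all_goals omega

theorem leadingCoeff_C_mul_X_pow_add_C_mul_X_add_C {R : Type*} [Semiring R] {m : ℕ} (hm : 2 ≤ m)
    {a : R} (ha : a ≠ 0) (b c : R) :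
    (C a * X ^ m + C b * X + C c).leadingCoeff = a := by
  rw [leadingCoeff, natDegree_C_mul_X_pow_add_C_mul_X_add_C hm ha]
  simp [coeff_X, coeff_C, show 1 ≠ m by omega, show m ≠ 0 by omega]

section Quadrinomial

variable {K : Type*} [Field K] {n : ℕ} {a b c e₁ e₂ u v : K}

theorem mul_eval_quadrinomial_of_eval_eq_zero {r : K} (hn : 1 ≤ n) (hb : b ≠ 0)
    (hn₁ : (n : K) - 1 ≠ 0)
    (hsum : u + v = -(((n : K) - 2) * a * b + c * n) / (b * ((n : K) - 1)))
    (hprod : u * v = a * c / b) (hr : a * r ^ (n - 1) + ((n : K) - 1) * b * r + n * c = 0) :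
    a * (r ^ n + a * r ^ (n - 1) + b * r + c) = -(((n : K) - 1) * b) * ((r - u) * (r - v)) := by
  have hquad : (r - u) * (r - v) = r ^ 2 - (u + v) * r + u * v := by ring
  rw [hquad, hsum, hprod, show r ^ n = r ^ (n - 1) * r by rw [← pow_succ, Nat.sub_add_cancel hn]]
  field_simp
  linear_combination (r + a) * hr

variable [CharZero K]

theorem mul_prod_eval_derivative_quadrinomial [IsAlgClosed K] (hn : 3 ≤ n) (ha : a ≠ 0)
    (hb : b ≠ 0) (ξ : Fin n → K)
    (hf : (X ^ n + C a * X ^ (n - 1) + C b * X + C c : K[X]) = ∏ i, (X - C (ξ i)))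
    (hsum : u + v = -(((n : K) - 2) * a * b + c * n) / (b * ((n : K) - 1)))
    (hprod : u * v = a * c / b) :
    a * c * ∏ i, (derivative (nodal univ ξ)).eval (ξ i)
      = (-(((n : K) - 1) * b)) ^ (n - 1)
        * ((a * u ^ (n - 1) + ((n : K) - 1) * b * u + n * c)
          * (a * v ^ (n - 1) + ((n : K) - 1) * b * v + n * c)) := by
  have hn₁ : (n : K) - 1 ≠ 0 := by
    rw [sub_ne_zero, ← Nat.cast_one, Ne, Nat.cast_inj]; omega
  set g : K[X] := C a * X ^ (n - 1) + C (((n : K) - 1) * b) * X + C ((n : K) * c)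
  have hnodal : nodal univ ξ = X ^ n + C a * X ^ (n - 1) + C b * X + C c := hf.symm
  have heval (x : K) : g.eval x = a * x ^ (n - 1) + ((n : K) - 1) * b * x + n * c := by
    simp [g]
  have hdeg : g.natDegree = n - 1 := natDegree_C_mul_X_pow_add_C_mul_X_add_C (by omega) ha _ _
  have hlead : g.leadingCoeff = a := leadingCoeff_C_mul_X_pow_add_C_mul_X_add_C (by omega) ha _ _
  have hc : (nodal univ ξ).eval 0 = c := by
    simp [hnodal, zero_pow (show n ≠ 0 by omega), zero_pow (show n - 1 ≠ 0 by omega)]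
  have heuler := eval_zero_mul_prod_eval_derivative_nodal ξ
  rw [Fintype.card_fin, hc, hnodal, C_mul_sub_X_mul_derivative_quadrinomial (by omega),
    ← hnodal] at heuler
  have hroots (r : K) (hr : r ∈ g.roots) :
      g.leadingCoeff * (nodal univ ξ).eval r = -(((n : K) - 1) * b) * ((r - u) * (r - v)) := by
    rw [hlead, hnodal]
    simpa using mul_eval_quadrinomial_of_eval_eq_zero (by omega) hb hn₁ hsum hprod
      ((heval r).symm.trans (mem_roots'.mp hr).2)
  have hres := leadingCoeff_mul_prod_eval_eq (IsAlgClosed.splits g) ξ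
    (by rw [Fintype.card_fin, hdeg]; omega) _ u v hroots
  rw [hlead, hdeg, heval, heval] at hres
  rw [mul_assoc, heuler]
  exact hres

theorem sum_choose_mul_eq_pow_add_pow (hn : 3 ≤ n) (x y : K) (hsum : u + v = e₁)
    (hprod : u * v = e₂) :
    ∑ i ∈ range ((n - 3) / 2 + 1),
        (2 * x * e₂ + y * (((n : K) - 2) / ((n : K) - 2 - 2 * (i : K))) * e₁)
          * ((n - 3).choose (2 * i) : K) * (e₁ / 2) ^ (n - 3 - 2 * i)
          * ((e₁ / 2) ^ 2 - e₂) ^ i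
      = x * e₂ * (u ^ (n - 3) + v ^ (n - 3))
        + y * (u ^ (n - 2) + v ^ (n - 2)
          - (1 + (-1) ^ n) * ((e₁ / 2) ^ 2 - e₂) ^ ((n - 2) / 2)) := by
  subst hsum hprod
  obtain ⟨t, s, rfl, rfl⟩ : ∃ t s, u = t + s ∧ v = t - s :=
    ⟨(u + v) / 2, (u - v) / 2, by ring, by ring⟩
  have hodd := add_pow_add_sub_pow_eq_sum_add (t := t) (s := s) (m := n - 2) (by omega)
  have hsign : (-1 : K) ^ (n - 2) = (-1) ^ n := by
    conv_rhs => rw [← Nat.sub_add_cancel (show 2 ≤ n by omega), pow_add]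
    norm_num
  rw [show n - 2 - 1 = n - 3 by omega, hsign] at hodd
  have hcast : (n : K) - 2 = ((n - 3 : ℕ) : K) + 1 := by
    rw [Nat.cast_sub hn]; ring
  rw [show (t + s + (t - s)) / 2 = t by ring, show t ^ 2 - (t + s) * (t - s) = s ^ 2 by ring,
    add_pow_add_sub_pow, hodd, add_sub_cancel_right]
  simp only [mul_sum, ← sum_add_distrib]
  refine sum_congr rfl fun i hi => ?_
  have hi : 2 * i ≤ n - 3 := by rw [mem_range] at hi; omega
  rw [show n - 2 = n - 3 + 1 by omega, Nat.cast_choose_succ_eq hi,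
    show n - 3 + 1 - 2 * i = n - 3 - 2 * i + 1 by omega, pow_succ, hcast]
  push_cast
  ring

theorem pow_mul_eval_mul_eval_eq_closed_form (hn : 3 ≤ n) (ha : a ≠ 0) (hb : b ≠ 0)
    (he₁ : e₁ = -(((n : K) - 2) * a * b + c * (n : K)) / (b * ((n : K) - 1)))
    (he₂ : e₂ = a * c / b) (hsum : u + v = e₁) (hprod : u * v = e₂) :
    (-(((n : K) - 1) * b)) ^ (n - 1)
        * ((a * u ^ (n - 1) + ((n : K) - 1) * b * u + n * c)
          * (a * v ^ (n - 1) + ((n : K) - 1) * b * v + n * c))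
      = a * c * ((-1) ^ (n - 1) * (n : K) ^ 4 * ((n : K) - 1) ^ (n - 3) * a⁻¹ ^ 2 * b ^ (n - 2)
          * ((((n : K) - 1) * a ^ 2 / (n : K) ^ 2) ^ 2 * e₂ ^ (n - 2)
            + (((n : K) - 1) * b / (n : K)) ^ 2 * e₂
            + (((n : K) - 1) * b / (n : K)) * (c - a * b / (n : K) ^ 2) * e₁
            + (c - a * b / (n : K) ^ 2) ^ 2
            - (1 + (-1 : K) ^ n) * (((n : K) - 1) * a ^ 2 / (n : K) ^ 2)
                * (c - a * b / (n : K) ^ 2)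
                * ((e₁ / 2) ^ 2 - e₂) ^ ((n - 2) / 2)
            - (((n : K) - 1) * a ^ 2 / (n : K) ^ 2)
                * ∑ i ∈ Finset.range ((n - 3) / 2 + 1),
                    (2 * (((n : K) - 1) * b / (n : K)) * e₂
                      + (c - a * b / (n : K) ^ 2)
                          * (((n : K) - 2) / ((n : K) - 2 - 2 * (i : K))) * e₁)
                      * (Nat.choose (n - 3) (2 * i) : K)
                      * (e₁ / 2) ^ (n - 3 - 2 * i)
                      * ((e₁ / 2) ^ 2 - e₂) ^ i)) := by
  have hn₀ : (n : K) ≠ 0 := Nat.cast_ne_zero.mpr (by omega)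
  have hn₁ : (n : K) - 1 ≠ 0 := by
    rw [sub_ne_zero, ← Nat.cast_one, Ne, Nat.cast_inj]; omega
  have hsplit (w : K) : w ^ (n - 1) = w ^ (n - 3) * w ^ 2 ∧ w ^ (n - 2) = w ^ (n - 3) * w :=
    ⟨by rw [← pow_add]; congr 1; omega, by rw [← pow_succ]; congr 1; omega⟩
  rw [sum_choose_mul_eq_pow_add_pow hn _ _ hsum hprod]
  have hexpand : (a * u ^ (n - 1) + ((n : K) - 1) * b * u + n * c)
        * (a * v ^ (n - 1) + ((n : K) - 1) * b * v + n * c)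
      = a ^ 2 * e₂ * e₂ ^ (n - 2) + a * ((n : K) - 1) * b * e₂ * (u ^ (n - 2) + v ^ (n - 2))
        + a * n * c * (e₁ * (u ^ (n - 2) + v ^ (n - 2)) - e₂ * (u ^ (n - 3) + v ^ (n - 3)))
        + ((n : K) - 1) ^ 2 * b ^ 2 * e₂ + ((n : K) - 1) * n * b * c * e₁
        + (n : K) ^ 2 * c ^ 2 := by
    rw [← hsum, ← hprod, mul_pow, (hsplit u).1, (hsplit v).1, (hsplit u).2, (hsplit v).2]
    ring
  rw [hexpand, neg_pow, mul_pow, (hsplit ((n : K) - 1)).1, (hsplit b).1, (hsplit b).2]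
  generalize u ^ (n - 2) + v ^ (n - 2) = p₂
  generalize u ^ (n - 3) + v ^ (n - 3) = p₃
  generalize e₂ ^ (n - 2) = q
  subst he₁ he₂
  field_simp
  ring

end Quadrinomial

/-- **Discriminant of `x^n + a x^{n-1} + b x + c`** (Theorem 4.1).
For a monic polynomial `f` over `ℂ` with roots `ξ₁, …, ξ_n` (with multiplicity),
the discriminant is `∏_{i<j} (ξ i - ξ j)^2`. -/
theorem discriminant_quadrinomial_x_pow_n_add_ax_pow_n_sub_one_add_bx
    (n : ℕ) (hn : 4 < n) (a b c : ℂ) (habc : a * b * c ≠ 0)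
    (e₁ e₂ : ℂ)
    (he₁ : e₁ = -(((n : ℂ) - 2) * a * b + c * (n : ℂ)) / (b * ((n : ℂ) - 1)))
    (he₂ : e₂ = a * c / b)
    (ξ : Fin n → ℂ)
    (hf : (X ^ n + C a * X ^ (n - 1) + C b * X + C c : ℂ[X])
        = ∏ i : Fin n, (X - C (ξ i))) :
    (∏ p ∈ Finset.univ.filter (fun p : Fin n × Fin n => p.1 < p.2),
        (ξ p.1 - ξ p.2) ^ 2)
      = (-1 : ℂ) ^ ((n + 2) * (n - 1) / 2) * (n : ℂ) ^ 4
          * ((n : ℂ) - 1) ^ (n - 3) * a⁻¹ ^ 2 * b ^ (n - 2)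
          * ((((n : ℂ) - 1) * a ^ 2 / (n : ℂ) ^ 2) ^ 2 * e₂ ^ (n - 2)
            + (((n : ℂ) - 1) * b / (n : ℂ)) ^ 2 * e₂
            + (((n : ℂ) - 1) * b / (n : ℂ)) * (c - a * b / (n : ℂ) ^ 2) * e₁
            + (c - a * b / (n : ℂ) ^ 2) ^ 2
            - (1 + (-1 : ℂ) ^ n) * (((n : ℂ) - 1) * a ^ 2 / (n : ℂ) ^ 2)
                * (c - a * b / (n : ℂ) ^ 2)
                * ((e₁ / 2) ^ 2 - e₂) ^ ((n - 2) / 2)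
            - (((n : ℂ) - 1) * a ^ 2 / (n : ℂ) ^ 2)
                * ∑ i ∈ Finset.range ((n - 3) / 2 + 1),
                    (2 * (((n : ℂ) - 1) * b / (n : ℂ)) * e₂
                      + (c - a * b / (n : ℂ) ^ 2)
                          * (((n : ℂ) - 2) / ((n : ℂ) - 2 - 2 * (i : ℂ))) * e₁)
                      * (Nat.choose (n - 3) (2 * i) : ℂ)
                      * (e₁ / 2) ^ (n - 3 - 2 * i)
                      * ((e₁ / 2) ^ 2 - e₂) ^ i) := by
  obtain ⟨⟨ha, hb⟩, hc⟩ : (a ≠ 0 ∧ b ≠ 0) ∧ c ≠ 0 := by simpa using habc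
  obtain ⟨s, hs⟩ := IsAlgClosed.exists_eq_mul_self ((e₁ / 2) ^ 2 - e₂)
  have hsum : (e₁ / 2 + s) + (e₁ / 2 - s) = e₁ := by ring
  have hprod : (e₁ / 2 + s) * (e₁ / 2 - s) = e₂ := by linear_combination hs
  have hres := mul_prod_eval_derivative_quadrinomial (by omega) ha hb ξ hf (hsum.trans he₁)
    (hprod.trans he₂)
  have hD := mul_left_cancel₀ (mul_ne_zero ha hc)
    (hres.trans (pow_mul_eval_mul_eval_eq_closed_form (by omega) ha hb he₁ he₂ hsum hprod))
  rw [prod_filter_lt_sub_sq_eq_prod_eval_derivative_nodal, Nat.add_two_mul_sub_one_div_two,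
    pow_add, hD]
  ring
end

section
/- Let b₀, b₁, b₃ ∈ ℂ with b₃ ≠ 0, and let the sequence (t_r)_{r ≥ 1} be defined by t₁ = 1/b₃, t₂ = 0, t₃ = b₁/b₃², and t_r = (b₁ t_{r-2} + b₀ t_{r-3})/b₃ for r > 3. Then for every r ≥ 1: if r is odd, t_r = (1/b₃)^{⌈r/2⌉} · Σ_{k=0}^{⌊r/6⌋} C(⌊r/2⌋ - k, ⌊r/2⌋ - 3k) · b₀^{2k} · b₁^{⌊r/2⌋ - 3k} · b₃^{k}, and if r is even, t_r = (1/b₃)^{r/2} · Σ_{k=1}^{⌊(r+2)/6⌋} C(r/2 - k, r/2 - 3k + 1) · b₀^{2k-1} · b₁^{r/2 - 3k + 1} · b₃^{k-1}. -/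
open Finset

noncomputable def Aterm (b₀ b₁ b₃ : ℂ) (m k : ℕ) : ℂ :=
  (Nat.choose (m - k) (2 * k) : ℂ) * b₀ ^ (2 * k) * b₁ ^ (m - 3 * k) * b₃ ^ k

noncomputable def Asum (b₀ b₁ b₃ : ℂ) (m : ℕ) : ℂ :=
  ∑ k ∈ Finset.range (m + 1), Aterm b₀ b₁ b₃ m k

noncomputable def Bterm (b₀ b₁ b₃ : ℂ) (m j : ℕ) : ℂ :=
  (Nat.choose (m - 1 - j) (2 * j + 1) : ℂ) * b₀ ^ (2 * j + 1) * b₁ ^ (m - 2 - 3 * j) * b₃ ^ j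

noncomputable def Bsum (b₀ b₁ b₃ : ℂ) (m : ℕ) : ℂ :=
  ∑ j ∈ Finset.range (m + 1), Bterm b₀ b₁ b₃ m j

lemma keyA (b₀ b₁ b₃ : ℂ) (n : ℕ) :
    Asum b₀ b₁ b₃ (n + 1) = b₁ * Asum b₀ b₁ b₃ n + b₀ * b₃ * Bsum b₀ b₁ b₃ n := by
  have hterm : ∀ i : ℕ,
      Aterm b₀ b₁ b₃ (n + 1) (i + 1)
        = b₁ * Aterm b₀ b₁ b₃ n (i + 1) + b₀ * b₃ * Bterm b₀ b₁ b₃ n i := by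
    intro i
    unfold Aterm Bterm
    rcases le_or_gt (3 * i + 3) n with h | h
    · have e1 : n + 1 - (i + 1) = n - 1 - i + 1 := by omega
      have e2 : 2 * (i + 1) = (2 * i + 1) + 1 := by ring
      have e3 : n + 1 - 3 * (i + 1) = (n - 3 * (i + 1)) + 1 := by omega
      have e4 : n - 2 - 3 * i = (n - 3 * (i + 1)) + 1 := by omega
      have e5 : n - (i + 1) = n - 1 - i := by omega
      rw [e1, e2, e3, e4, e5, Nat.choose_succ_succ]
      push_cast
      ring
    · rcases eq_or_lt_of_le (by omega : n ≤ 3 * i + 2) with h2 | h2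
      · have e1 : n + 1 - (i + 1) = 2 * (i + 1) := by omega
        have e2 : n - 1 - i = 2 * i + 1 := by omega
        have e3 : n - (i + 1) = 2 * i + 1 := by omega
        have e4 : n + 1 - 3 * (i + 1) = 0 := by omega
        have e5 : n - 2 - 3 * i = 0 := by omega
        rw [e1, e2, e3, e4, e5, Nat.choose_self, Nat.choose_self,
          Nat.choose_eq_zero_of_lt (by omega)]
        push_cast
        ring
      · have z1 : Nat.choose (n + 1 - (i + 1)) (2 * (i + 1)) = 0 :=
          Nat.choose_eq_zero_of_lt (by omega)
        have z2 : Nat.choose (n - (i + 1)) (2 * (i + 1)) = 0 :=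
          Nat.choose_eq_zero_of_lt (by omega)
        have z3 : Nat.choose (n - 1 - i) (2 * i + 1) = 0 :=
          Nat.choose_eq_zero_of_lt (by omega)
        rw [z1, z2, z3]
        push_cast
        ring
  have hA0 : Aterm b₀ b₁ b₃ (n + 1) 0 = b₁ * Aterm b₀ b₁ b₃ n 0 := by
    unfold Aterm
    simp [pow_succ]
    ring
  have hAn : Aterm b₀ b₁ b₃ n (n + 1) = 0 := by
    unfold Aterm
    rw [Nat.choose_eq_zero_of_lt (by omega)]
    push_cast; ring
  calc Asum b₀ b₁ b₃ (n + 1)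
      = (∑ i ∈ Finset.range (n + 1), Aterm b₀ b₁ b₃ (n + 1) (i + 1))
          + Aterm b₀ b₁ b₃ (n + 1) 0 := Finset.sum_range_succ' _ _
    _ = (∑ i ∈ Finset.range (n + 1),
          (b₁ * Aterm b₀ b₁ b₃ n (i + 1) + b₀ * b₃ * Bterm b₀ b₁ b₃ n i))
          + b₁ * Aterm b₀ b₁ b₃ n 0 := by rw [hA0]; exact congrArg (· + _) (Finset.sum_congr rfl fun i _ => hterm i)
    _ = ((∑ i ∈ Finset.range (n + 1), b₁ * Aterm b₀ b₁ b₃ n (i + 1))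
          + b₁ * Aterm b₀ b₁ b₃ n 0)
          + ∑ i ∈ Finset.range (n + 1), b₀ * b₃ * Bterm b₀ b₁ b₃ n i := by
        rw [Finset.sum_add_distrib]; ring
    _ = (∑ i ∈ Finset.range (n + 2), b₁ * Aterm b₀ b₁ b₃ n i)
          + b₀ * b₃ * ∑ i ∈ Finset.range (n + 1), Bterm b₀ b₁ b₃ n i := by
        rw [Finset.sum_range_succ' (fun i => b₁ * Aterm b₀ b₁ b₃ n i) (n + 1)]
        rw [Finset.mul_sum]
    _ = b₁ * Asum b₀ b₁ b₃ n + b₀ * b₃ * Bsum b₀ b₁ b₃ n := by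
        rw [Finset.sum_range_succ, hAn]
        unfold Asum Bsum
        rw [Finset.mul_sum, Finset.mul_sum]
        ring

lemma keyB (b₀ b₁ b₃ : ℂ) (n : ℕ) :
    Bsum b₀ b₁ b₃ (n + 2) = b₁ * Bsum b₀ b₁ b₃ (n + 1) + b₀ * Asum b₀ b₁ b₃ n := by
  have hterm : ∀ j : ℕ,
      Bterm b₀ b₁ b₃ (n + 2) j
        = b₁ * Bterm b₀ b₁ b₃ (n + 1) j + b₀ * Aterm b₀ b₁ b₃ n j := by
    intro j
    unfold Aterm Bterm
    have e0 : n + 2 - 1 - j = n + 1 - j := by omega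
    have e0' : n + 2 - 2 - 3 * j = n - 3 * j := by omega
    have e0'' : n + 1 - 1 - j = n - j := by omega
    rw [e0, e0', e0'']
    rcases le_or_gt (3 * j + 1) n with h | h
    · have e1 : n + 1 - j = (n - j) + 1 := by omega
      have e2 : n + 1 - 2 - 3 * j = (n - 3 * j) - 1 := by omega
      have e3 : n - 3 * j = ((n - 3 * j) - 1) + 1 := by omega
      rw [e1, Nat.choose_succ_succ', e2]
      nth_rewrite 1 [e3]
      nth_rewrite 3 [e3]
      push_cast
      ring
    · rcases eq_or_lt_of_le (by omega : n ≤ 3 * j) with h2 | h2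
      · have e1 : n + 1 - j = 2 * j + 1 := by omega
        have e2 : n - j = 2 * j := by omega
        have e3 : n - 3 * j = 0 := by omega
        have e4 : n + 1 - 2 - 3 * j = 0 := by omega
        rw [e1, e2, e3, e4, Nat.choose_self, Nat.choose_self,
          Nat.choose_eq_zero_of_lt (by omega)]
        push_cast
        ring
      · have z1 : Nat.choose (n + 1 - j) (2 * j + 1) = 0 :=
          Nat.choose_eq_zero_of_lt (by omega)
        have z2 : Nat.choose (n - j) (2 * j + 1) = 0 :=
          Nat.choose_eq_zero_of_lt (by omega)
        have z3 : Nat.choose (n - j) (2 * j) = 0 :=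
          Nat.choose_eq_zero_of_lt (by omega)
        rw [z1, z2, z3]
        push_cast
        ring
  have zB : Bterm b₀ b₁ b₃ (n + 1) (n + 2) = 0 := by
    unfold Bterm
    rw [Nat.choose_eq_zero_of_lt (by omega)]
    push_cast; ring
  have zA1 : Aterm b₀ b₁ b₃ n (n + 1) = 0 := by
    unfold Aterm
    rw [Nat.choose_eq_zero_of_lt (by omega)]
    push_cast; ring
  have zA2 : Aterm b₀ b₁ b₃ n (n + 2) = 0 := by
    unfold Aterm
    rw [Nat.choose_eq_zero_of_lt (by omega)]
    push_cast; ring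
  calc Bsum b₀ b₁ b₃ (n + 2)
      = ∑ j ∈ Finset.range (n + 3),
          (b₁ * Bterm b₀ b₁ b₃ (n + 1) j + b₀ * Aterm b₀ b₁ b₃ n j) :=
        Finset.sum_congr rfl fun j _ => hterm j
    _ = b₁ * (∑ j ∈ Finset.range (n + 3), Bterm b₀ b₁ b₃ (n + 1) j)
          + b₀ * ∑ j ∈ Finset.range (n + 3), Aterm b₀ b₁ b₃ n j := by
        rw [Finset.sum_add_distrib, Finset.mul_sum, Finset.mul_sum]
    _ = b₁ * Bsum b₀ b₁ b₃ (n + 1) + b₀ * Asum b₀ b₁ b₃ n := by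
        rw [Finset.sum_range_succ, Finset.sum_range_succ (fun j => Aterm b₀ b₁ b₃ n j),
          Finset.sum_range_succ (fun j => Aterm b₀ b₁ b₃ n j), zB, zA1, zA2]
        unfold Asum Bsum
        ring

lemma mainAB (b₀ b₁ b₃ : ℂ) (hb₃ : b₃ ≠ 0)
    (t : ℕ → ℂ)
    (ht1 : t 1 = 1 / b₃)
    (ht2 : t 2 = 0)
    (ht3 : t 3 = b₁ / b₃ ^ 2)
    (htr : ∀ r : ℕ, 3 < r → t r = (b₁ * t (r - 2) + b₀ * t (r - 3)) / b₃) :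
    ∀ m : ℕ, t (2 * m + 1) = (1 / b₃) ^ (m + 1) * Asum b₀ b₁ b₃ m
      ∧ (1 ≤ m → t (2 * m) = (1 / b₃) ^ m * Bsum b₀ b₁ b₃ m) := by
  intro m
  induction m using Nat.strong_induction_on with
  | _ m ih =>
    match m with
    | 0 =>
      refine ⟨?_, by omega⟩
      simp only [Asum, Aterm]
      norm_num [ht1]
    | 1 =>
      constructor
      · have hA : Asum b₀ b₁ b₃ 1 = b₁ := by
          simp [Asum, Aterm, Finset.sum_range_succ]
        rw [show 2 * 1 + 1 = 3 from rfl, ht3, hA]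
        rw [div_eq_mul_inv, one_div]
        ring
      · intro _
        have hB : Bsum b₀ b₁ b₃ 1 = 0 := by
          simp [Bsum, Bterm, Finset.sum_range_succ]
        rw [show 2 * 1 = 2 from rfl, ht2, hB, mul_zero]
    | (n + 2) =>
      have ih1 := ih (n + 1) (by omega)
      have ih0 := ih n (by omega)
      constructor
      · have hr := htr (2 * (n + 2) + 1) (by omega)
        have e1 : 2 * (n + 2) + 1 - 2 = 2 * (n + 1) + 1 := by omega
        have e2 : 2 * (n + 2) + 1 - 3 = 2 * (n + 1) := by omega
        rw [e1, e2] at hr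
        have hAeq : Asum b₀ b₁ b₃ (n + 2)
            = b₁ * Asum b₀ b₁ b₃ (n + 1) + b₀ * b₃ * Bsum b₀ b₁ b₃ (n + 1) :=
          keyA b₀ b₁ b₃ (n + 1)
        rw [hr, ih1.1, ih1.2 (by omega), hAeq]
        have hinv : b₃⁻¹ * b₃ = 1 := inv_mul_cancel₀ hb₃
        simp only [one_div, div_eq_mul_inv, pow_succ]
        linear_combination (-(b₀ * Bsum b₀ b₁ b₃ (n + 1) * b₃⁻¹ ^ n * b₃⁻¹ * b₃⁻¹)) * hinv
      · intro _
        have hr := htr (2 * (n + 2)) (by omega)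
        have e1 : 2 * (n + 2) - 2 = 2 * (n + 1) := by omega
        have e2 : 2 * (n + 2) - 3 = 2 * n + 1 := by omega
        rw [e1, e2] at hr
        rw [hr, ih1.2 (by omega), ih0.1, keyB]
        simp only [one_div, div_eq_mul_inv, pow_succ]
        ring

/-- **Explicit formula for the recurrent sequence `(t_r)`** (Lemma 5.2).
Here `(r + 1) / 2` is the ceiling `⌈r/2⌉` and `r / 2` the floor `⌊r/2⌋`
(natural number division). -/
theorem explicit_formula_for_t_sequence
    (b₀ b₁ b₃ : ℂ) (hb₃ : b₃ ≠ 0)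
    (t : ℕ → ℂ)
    (ht1 : t 1 = 1 / b₃)
    (ht2 : t 2 = 0)
    (ht3 : t 3 = b₁ / b₃ ^ 2)
    (htr : ∀ r : ℕ, 3 < r → t r = (b₁ * t (r - 2) + b₀ * t (r - 3)) / b₃) :
    ∀ r : ℕ, 1 ≤ r →
      (Odd r →
        t r = (1 / b₃) ^ ((r + 1) / 2)
          * ∑ k ∈ Finset.range (r / 6 + 1),
              (Nat.choose (r / 2 - k) (r / 2 - 3 * k) : ℂ)
                * b₀ ^ (2 * k) * b₁ ^ (r / 2 - 3 * k) * b₃ ^ k)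
      ∧ (Even r →
        t r = (1 / b₃) ^ (r / 2)
          * ∑ k ∈ Finset.Icc 1 ((r + 2) / 6),
              (Nat.choose (r / 2 - k) (r / 2 + 1 - 3 * k) : ℂ)
                * b₀ ^ (2 * k - 1) * b₁ ^ (r / 2 + 1 - 3 * k) * b₃ ^ (k - 1)) := by
  intro r hr
  constructor
  · rintro ⟨m, rfl⟩
    have h1 : (2 * m + 1 + 1) / 2 = m + 1 := by omega
    have h2 : (2 * m + 1) / 2 = m := by omega
    have h3 : (2 * m + 1) / 6 = m / 3 := by omega
    rw [h1, h2, h3, (mainAB b₀ b₁ b₃ hb₃ t ht1 ht2 ht3 htr m).1]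
    congr 1
    unfold Asum
    rw [← Finset.sum_subset (Finset.range_subset_range.mpr (by omega : m / 3 + 1 ≤ m + 1))
      (fun k _ hk => ?_)]
    · apply Finset.sum_congr rfl
      intro k hk
      rw [Finset.mem_range] at hk
      have h3k : 3 * k ≤ m := by omega
      unfold Aterm
      have e : m - 3 * k = (m - k) - (2 * k) := by omega
      rw [e, Nat.choose_symm (by omega : 2 * k ≤ m - k), ← e]
    · rw [Finset.mem_range] at hk
      unfold Aterm
      rw [Nat.choose_eq_zero_of_lt (by omega)]
      push_cast; ring
  · rintro ⟨m, rfl⟩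
    have hm : 1 ≤ m := by omega
    rw [show m + m = 2 * m from by ring]
    have h1 : 2 * m / 2 = m := by omega
    have h2 : (2 * m + 2) / 6 = (m + 1) / 3 := by omega
    rw [h1, h2, (mainAB b₀ b₁ b₃ hb₃ t ht1 ht2 ht3 htr m).2 hm]
    congr 1
    rw [show Finset.Icc 1 ((m + 1) / 3) = Finset.Ico 1 ((m + 1) / 3 + 1) from
      by rw [Finset.Ico_add_one_right_eq_Icc]]
    rw [Finset.sum_Ico_eq_sum_range]
    unfold Bsum
    rw [show (m + 1) / 3 + 1 - 1 = (m + 1) / 3 from by omega]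
    rw [← Finset.sum_subset (Finset.range_subset_range.mpr (by omega : (m + 1) / 3 ≤ m + 1))
      (fun j _ hj => ?_)]
    · apply Finset.sum_congr rfl
      intro j hj
      rw [Finset.mem_range] at hj
      have h3j : 3 * j + 3 ≤ m + 1 := by omega
      unfold Bterm
      have e1 : m + 1 - 3 * (1 + j) = m - 2 - 3 * j := by omega
      have e2 : 2 * (1 + j) - 1 = 2 * j + 1 := by omega
      have e3 : (1 + j) - 1 = j := by omega
      have e4 : m - (1 + j) = m - 1 - j := by omega
      have e5 : m - 2 - 3 * j = (m - 1 - j) - (2 * j + 1) := by omega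
      rw [e1, e2, e3, e4, e5, Nat.choose_symm (by omega : 2 * j + 1 ≤ m - 1 - j), ← e5]
    · rw [Finset.mem_range] at hj
      unfold Bterm
      rw [Nat.choose_eq_zero_of_lt (by omega)]
      push_cast; ring
end
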